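/- arXiv:1704.07291 — 2 statements merged into one kernel-verified Lean document; each statement's English description precedes it below -/
import Mathlib

section
/- Let G = (V, E) be a finite simple undirected graph. Build a CBCN whose index set is V ⊕ E (one state-variable per vertex and one per edge), where for each edge e = {u, v} ∈ E the only true entries of ε with source e are ε e e, ε e u and ε e v (a self-loop on e and arcs from e to its two endpoints), and ε has no true entries with source a vertex. For Y ⊆ V, let the directly controlled set be I = E ∪ Y (every edge-variable plus the vertices in Y). Then this CBCN is controllable if and only if Y is a dominating set of G, i.e., every vertex in V \ Y has a neighbor in Y. -/
def cbcnStep {S : Type*} [Fintype S] [DecidableEq S] (ε : S → S → Bool) (I : Finset S)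
    (u x : S → Bool) : S → Bool :=
  fun i => if i ∈ I then u i else decide (∀ j : S, ε j i = true → x j = true)

def cbcnTraj {S : Type*} [Fintype S] [DecidableEq S] (ε : S → S → Bool) (I : Finset S)
    (u : ℕ → S → Bool) (a : S → Bool) : ℕ → S → Bool
  | 0 => a
  | k + 1 => cbcnStep ε I (u k) (cbcnTraj ε I u a k)

def cbcnControllable {S : Type*} [Fintype S] [DecidableEq S] (ε : S → S → Bool)
    (I : Finset S) : Prop :=
  ∀ a b : S → Bool, ∃ (N : ℕ) (u : ℕ → S → Bool), cbcnTraj ε I u a N = b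

/-- The dependency structure built from a graph `G`: one state-variable per
vertex and one per edge; each edge has a self-loop and arcs to its two
endpoints; vertices have no outgoing arcs. -/
def graphEps {V : Type*} [DecidableEq V] (G : SimpleGraph V) :
    (V ⊕ G.edgeSet) → (V ⊕ G.edgeSet) → Bool
  | Sum.inl _, _ => false
  | Sum.inr e, Sum.inr e' => decide (e = e')
  | Sum.inr e, Sum.inl v => decide (v ∈ (e : Sym2 V))

/-- The CBCN built from a graph `G`, with directly controlled set consisting of
all edge-variables together with the vertex set `Y`, is controllable iff `Y`
is a dominating set of `G`. -/
theorem graph_cbcn_controllable_iff_dominating {V : Type*} [Fintype V] [DecidableEq V]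
    (G : SimpleGraph V) [DecidableRel G.Adj] (Y : Finset V) :
    cbcnControllable (graphEps G)
      ((Finset.univ.image (Sum.inr : G.edgeSet → V ⊕ G.edgeSet)) ∪
        Y.image (Sum.inl : V → V ⊕ G.edgeSet)) ↔
      ∀ v : V, v ∉ Y → ∃ w ∈ Y, G.Adj v w := by
  classical
  set I : Finset (V ⊕ G.edgeSet) :=
    (Finset.univ.image (Sum.inr : G.edgeSet → V ⊕ G.edgeSet)) ∪
      Y.image (Sum.inl : V → V ⊕ G.edgeSet) with hI
  have hmemr : ∀ e : G.edgeSet, Sum.inr e ∈ I := by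
    intro e; simp [hI]
  have hmeml : ∀ v : V, (Sum.inl v ∈ I ↔ v ∈ Y) := by
    intro v; simp [hI]
  have hstep_l : ∀ (u x : V ⊕ G.edgeSet → Bool) (v : V), v ∉ Y →
      cbcnStep (graphEps G) I u x (Sum.inl v) =
        decide (∀ e : G.edgeSet, v ∈ (e : Sym2 V) → x (Sum.inr e) = true) := by
    intro u x v hv
    have : Sum.inl v ∉ I := by simp [hmeml, hv]
    simp only [cbcnStep, if_neg this]
    congr 1
    simp only [eq_iff_iff]
    constructor
    · intro h e he
      exact h (Sum.inr e) (by simp [graphEps, he])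
    · intro h j hj
      match j with
      | Sum.inl w => simp [graphEps] at hj
      | Sum.inr e => exact h e (by simpa [graphEps] using hj)
  constructor
  · intro hctrl v hv
    by_contra hno
    push_neg at hno
    obtain ⟨N, u, hu⟩ := hctrl (fun _ => true)
      (fun i => decide (i ≠ Sum.inl v))
    match N with
    | 0 =>
      have := congrFun hu (Sum.inl v)
      simp [cbcnTraj] at this
    | N + 1 =>
      set x := cbcnTraj (graphEps G) I u (fun _ => true) N with hx
      have hv' : cbcnStep (graphEps G) I (u N) x (Sum.inl v) = false := by
        have := congrFun hu (Sum.inl v)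
        simpa [cbcnTraj, ← hx] using this
      rw [hstep_l _ _ v hv] at hv'
      simp only [decide_eq_false_iff_not, not_forall, Classical.not_imp] at hv'
      obtain ⟨e, he, hxe⟩ := hv'
      set w := Sym2.Mem.other he with hwdef
      have hwe : w ∈ (e : Sym2 V) := Sym2.other_mem he
      have hespec : s(v, w) = (e : Sym2 V) := Sym2.other_spec he
      have hadj : G.Adj v w := by
        rw [← SimpleGraph.mem_edgeSet, hespec]; exact e.2
      have hwv : w ≠ v := (G.ne_of_adj hadj).symm
      have hwY : w ∉ Y := fun h => hno w h hadj
      have hv'' : cbcnStep (graphEps G) I (u N) x (Sum.inl w) = true := by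
        have := congrFun hu (Sum.inl w)
        simpa [cbcnTraj, ← hx, hwv] using this
      rw [hstep_l _ _ w hwY] at hv''
      rw [decide_eq_true_iff] at hv''
      exact hxe (hv'' e hwe)
  · intro hdom a b
    set y : G.edgeSet → Bool := fun e =>
      !decide (∃ p q, p ∉ Y ∧ b (Sum.inl p) = false ∧ q ∈ Y ∧ (e : Sym2 V) = s(p, q)) with hy
    set u : ℕ → (V ⊕ G.edgeSet) → Bool := fun k i =>
      if k = 0 then (match i with
        | Sum.inl _ => true
        | Sum.inr e => y e) else b i with huu
    refine ⟨2, u, ?_⟩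
    have hx1 : ∀ e : G.edgeSet,
        cbcnTraj (graphEps G) I u a 1 (Sum.inr e) = y e := by
      intro e
      show cbcnStep (graphEps G) I (u 0) a (Sum.inr e) = y e
      simp [cbcnStep, hmemr e, huu]
    funext i
    show cbcnStep (graphEps G) I (u 1) (cbcnTraj (graphEps G) I u a 1) i = b i
    match i with
    | Sum.inr e => simp [cbcnStep, hmemr e, huu]
    | Sum.inl v =>
      by_cases hv : v ∈ Y
      · simp [cbcnStep, (hmeml v).2 hv, huu]
      · rw [hstep_l _ _ v hv]
        by_cases hb : b (Sum.inl v) = true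
        · rw [hb, decide_eq_true_iff]
          intro e he
          rw [hx1 e, hy]
          simp only [Bool.not_eq_true', decide_eq_false_iff_not]
          rintro ⟨p, q, hp, hbp, hq, heq⟩
          rw [heq, Sym2.mem_iff] at he
          rcases he with rfl | rfl
          · rw [hb] at hbp; simp at hbp
          · exact hv hq
        · have hb' : b (Sum.inl v) = false := by simpa using hb
          rw [hb', decide_eq_false_iff_not]
          obtain ⟨w, hwY, hadj⟩ := hdom v hv
          intro h
          have hmem : v ∈ ((⟨s(v, w), G.mem_edgeSet.mpr hadj⟩ : G.edgeSet) : Sym2 V) := by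
            simp
          have := h ⟨s(v, w), G.mem_edgeSet.mpr hadj⟩ hmem
          rw [hx1] at this
          rw [hy] at this
          simp only [Bool.not_eq_true', decide_eq_false_iff_not] at this
          exact this ⟨v, w, hv, hb', hwY, rfl⟩
end

section
/- Let G = (V, E) be a finite simple undirected graph. Build a CBCN whose index set is V ⊕ E, where for each edge e = {u, v} ∈ E the only true entries of ε with source e are ε e e, ε e u and ε e v, and ε has no true entries with source a vertex. Then the minimum cardinality of a set I ⊆ V ⊕ E of directly controlled indices for which the resulting CBCN is controllable equals |E| + γ(G), where γ(G) is the minimum cardinality of a dominating set of G. -/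
section AuxSection

variable {V : Type*} [Fintype V] [DecidableEq V] (G : SimpleGraph V) [DecidableRel G.Adj]

lemma step_inl (I : Finset (V ⊕ G.edgeSet)) (u x : (V ⊕ G.edgeSet) → Bool) (v : V)
    (hv : Sum.inl v ∉ I) :
    cbcnStep (graphEps G) I u x (Sum.inl v) =
      decide (∀ e : G.edgeSet, v ∈ (e : Sym2 V) → x (Sum.inr e) = true) := by
  unfold cbcnStep
  rw [if_neg hv]
  apply decide_eq_decide.mpr
  constructor
  · intro h e hve
    exact h (Sum.inr e) (by simpa [graphEps] using hve)
  · intro h j hj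
    match j with
    | Sum.inl w => simp [graphEps] at hj
    | Sum.inr e => exact h e (by simpa [graphEps] using hj)

lemma traj_inr (I : Finset (V ⊕ G.edgeSet)) (e : G.edgeSet) (he : Sum.inr e ∉ I)
    (u : ℕ → (V ⊕ G.edgeSet) → Bool) (a : (V ⊕ G.edgeSet) → Bool) (N : ℕ) :
    cbcnTraj (graphEps G) I u a N (Sum.inr e) = a (Sum.inr e) := by
  induction N with
  | zero => rfl
  | succ n ih =>
    show cbcnStep _ _ _ _ _ = _
    unfold cbcnStep
    rw [if_neg he, ← ih]
    set x := cbcnTraj (graphEps G) I u a n with hx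
    conv_rhs => rw [← Bool.decide_coe (x (Sum.inr e))]
    apply decide_eq_decide.mpr
    constructor
    · intro h
      exact h (Sum.inr e) (by simp [graphEps])
    · intro h j hj
      match j with
      | Sum.inl w => simp [graphEps] at hj
      | Sum.inr e' =>
        have : e' = e := by simpa [graphEps] using hj
        rwa [this]

open Classical in
lemma controllable_iff (I : Finset (V ⊕ G.edgeSet)) :
    cbcnControllable (graphEps G) I ↔
      ((∀ e : G.edgeSet, Sum.inr e ∈ I) ∧
        (∀ v : V, Sum.inl v ∉ I → ∃ w : V, G.Adj v w ∧ Sum.inl w ∈ I)) := by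
  constructor
  · intro h
    constructor
    · intro e
      by_contra he
      obtain ⟨N, u, hN⟩ := h (fun _ => false) (fun _ => true)
      have h1 := traj_inr G I e he u (fun _ => false) N
      rw [hN] at h1
      simp at h1
    · intro v hv
      by_contra hw
      push_neg at hw
      obtain ⟨N, u, hN⟩ := h (fun _ => true)
        (fun i => if i = Sum.inl v then false else true)
      match N with
      | 0 =>
        have := congrFun hN (Sum.inl v)
        simp [cbcnTraj] at this
      | n + 1 =>
        have hv' : cbcnTraj (graphEps G) I u (fun _ => true) (n+1) (Sum.inl v) = false := by
          rw [hN]; simp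
        rw [show cbcnTraj (graphEps G) I u (fun _ => true) (n+1)
            = cbcnStep (graphEps G) I (u n) (cbcnTraj (graphEps G) I u (fun _ => true) n)
            from rfl, step_inl G I _ _ v hv] at hv'
        rw [decide_eq_false_iff_not] at hv'
        push_neg at hv'
        obtain ⟨e, hve, hxe⟩ := hv'
        have hxe' : cbcnTraj (graphEps G) I u (fun _ => true) n (Sum.inr e) = false :=
          Bool.eq_false_iff.mpr hxe
        set w := Sym2.Mem.other hve with hwdef
        have hspec : s(v, w) = (e : Sym2 V) := Sym2.other_spec hve
        have hadj : G.Adj v w := by rw [← SimpleGraph.mem_edgeSet, hspec]; exact e.2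
        have hwmem : w ∈ (e : Sym2 V) := Sym2.other_mem hve
        have hwI : Sum.inl w ∉ I := hw w hadj
        have h2 : cbcnTraj (graphEps G) I u (fun _ => true) (n+1) (Sum.inl w) = false := by
          rw [show cbcnTraj (graphEps G) I u (fun _ => true) (n+1)
              = cbcnStep (graphEps G) I (u n) (cbcnTraj (graphEps G) I u (fun _ => true) n)
              from rfl, step_inl G I _ _ w hwI]
          rw [decide_eq_false_iff_not]
          intro hall
          exact hxe (hall e hwmem)
        have h3 := congrFun hN (Sum.inl w)
        rw [h2] at h3
        simp [hadj.ne'] at h3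
  · rintro ⟨hE, hD⟩ a b
    set y : G.edgeSet → Bool := fun e =>
      if (∃ p, p ∈ (e : Sym2 V) ∧ Sum.inl p ∉ I ∧ b (Sum.inl p) = false ∧
          ∃ q, q ∈ (e : Sym2 V) ∧ Sum.inl q ∈ I) then false else true with hy
    refine ⟨2, fun k => match k with | 0 => Sum.elim (fun _ => true) y | _ + 1 => b, ?_⟩
    funext i
    show cbcnStep (graphEps G) I b
      (cbcnStep (graphEps G) I (Sum.elim (fun _ => true) y) a) i = b i
    by_cases hi : i ∈ I
    · unfold cbcnStep; rw [if_pos hi]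
    · match i with
      | Sum.inr e => exact absurd (hE e) hi
      | Sum.inl v =>
        rw [step_inl G I _ _ v hi]
        have hx1 : ∀ e : G.edgeSet,
            cbcnStep (graphEps G) I (Sum.elim (fun _ => true) y) a (Sum.inr e) = y e := by
          intro e; unfold cbcnStep; rw [if_pos (hE e)]; rfl
        simp only [hx1]
        cases hb : b (Sum.inl v) with
        | true =>
          simp only [decide_eq_true_eq]
          intro e hve
          rw [hy]
          simp only
          rw [if_neg]
          rintro ⟨p, hpe, hpI, hbp, q, hqe, hqI⟩
          have hpq : p ≠ q := fun h => hpI (h ▸ hqI)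
          have he' : (e : Sym2 V) = s(p, q) :=
            ((Sym2.mem_and_mem_iff hpq).mp ⟨hpe, hqe⟩)
          rw [he'] at hve
          rcases Sym2.mem_iff.mp hve with rfl | rfl
          · rw [hb] at hbp; exact Bool.true_eq_false.mp hbp
          · exact hi hqI
        | false =>
          rw [decide_eq_false_iff_not]
          intro hall
          obtain ⟨w, hadj, hwI⟩ := hD v hi
          have he0 : s(v, w) ∈ G.edgeSet := hadj
          have h1 := hall ⟨s(v, w), he0⟩ (Sym2.mem_mk_left v w)
          rw [hy] at h1
          simp only at h1
          rw [if_pos ⟨v, Sym2.mem_mk_left v w, hi, hb, w, Sym2.mem_mk_right v w, hwI⟩] at h1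
          exact Bool.false_eq_true.mp h1

lemma card_helper (D : Finset V) :
    ((Finset.univ.image (Sum.inr : G.edgeSet → V ⊕ G.edgeSet)) ∪ D.image Sum.inl).card
      = Fintype.card G.edgeSet + D.card := by
  rw [Finset.card_union_of_disjoint, Finset.card_image_of_injective _ Sum.inr_injective,
    Finset.card_image_of_injective _ Sum.inl_injective, Finset.card_univ]
  rw [Finset.disjoint_left]
  rintro x hx hx'
  obtain ⟨e, -, rfl⟩ := Finset.mem_image.mp hx
  obtain ⟨v, -, hv⟩ := Finset.mem_image.mp hx'
  exact Sum.inl_ne_inr hv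

end AuxSection

/-- For the CBCN built from a graph `G`, the minimum number of directly
controlled state-variables making the network controllable equals the number
of edges plus the domination number of `G`. -/
theorem graph_cbcn_min_controls {V : Type*} [Fintype V] [DecidableEq V]
    (G : SimpleGraph V) [DecidableRel G.Adj] :
    sInf {k : ℕ | ∃ I : Finset (V ⊕ G.edgeSet),
        cbcnControllable (graphEps G) I ∧ I.card = k} =
      Fintype.card G.edgeSet +
        sInf {k : ℕ | ∃ D : Finset V,
          (∀ v : V, v ∉ D → ∃ w ∈ D, G.Adj v w) ∧ D.card = k} := by
  classical
  apply le_antisymm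
  · have hBne : ({k : ℕ | ∃ D : Finset V,
        (∀ v : V, v ∉ D → ∃ w ∈ D, G.Adj v w) ∧ D.card = k}).Nonempty :=
      ⟨(Finset.univ : Finset V).card, Finset.univ,
        fun v hv => absurd (Finset.mem_univ v) hv, rfl⟩
    obtain ⟨D, hDdom, hDcard⟩ := Nat.sInf_mem hBne
    set I := (Finset.univ.image (Sum.inr : G.edgeSet → V ⊕ G.edgeSet)) ∪ D.image Sum.inl
      with hIdef
    have hcont : cbcnControllable (graphEps G) I := by
      rw [controllable_iff]
      refine ⟨fun e => Finset.mem_union_left _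
        (Finset.mem_image_of_mem _ (Finset.mem_univ e)), ?_⟩
      intro v hv
      have hvD : v ∉ D := fun h => hv (Finset.mem_union_right _ (Finset.mem_image_of_mem _ h))
      obtain ⟨w, hwD, hadj⟩ := hDdom v hvD
      exact ⟨w, hadj, Finset.mem_union_right _ (Finset.mem_image_of_mem _ hwD)⟩
    have h1 : sInf {k : ℕ | ∃ I : Finset (V ⊕ G.edgeSet),
        cbcnControllable (graphEps G) I ∧ I.card = k} ≤ I.card :=
      Nat.sInf_le ⟨I, hcont, rfl⟩
    exact h1.trans_eq (by rw [hIdef, card_helper, hDcard])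
  · have hAne : ({k : ℕ | ∃ I : Finset (V ⊕ G.edgeSet),
        cbcnControllable (graphEps G) I ∧ I.card = k}).Nonempty := by
      refine ⟨(Finset.univ : Finset (V ⊕ G.edgeSet)).card, Finset.univ, ?_, rfl⟩
      rw [controllable_iff]
      exact ⟨fun e => Finset.mem_univ _, fun v hv => absurd (Finset.mem_univ _) hv⟩
    obtain ⟨I, hI, hIcard⟩ := Nat.sInf_mem hAne
    rw [controllable_iff] at hI
    obtain ⟨hE, hD⟩ := hI
    set D := Finset.univ.filter (fun v => Sum.inl v ∈ I) with hDdef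
    have hdom : ∀ v : V, v ∉ D → ∃ w ∈ D, G.Adj v w := by
      intro v hv
      have hvI : Sum.inl v ∉ I := by
        intro h; exact hv (by simp [hDdef, h])
      obtain ⟨w, hadj, hwI⟩ := hD v hvI
      exact ⟨w, by simp [hDdef, hwI], hadj⟩
    have hsub : ((Finset.univ.image (Sum.inr : G.edgeSet → V ⊕ G.edgeSet))
        ∪ D.image Sum.inl) ⊆ I := by
      intro x hx
      rcases Finset.mem_union.mp hx with hx | hx
      · obtain ⟨e, -, rfl⟩ := Finset.mem_image.mp hx; exact hE e
      · obtain ⟨v, hvD, rfl⟩ := Finset.mem_image.mp hx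
        simpa [hDdef] using hvD
    have h2 : sInf {k : ℕ | ∃ D : Finset V,
        (∀ v : V, v ∉ D → ∃ w ∈ D, G.Adj v w) ∧ D.card = k} ≤ D.card :=
      Nat.sInf_le ⟨D, hdom, rfl⟩
    have h3 : Fintype.card G.edgeSet + D.card ≤ I.card := by
      rw [← card_helper G D]; exact Finset.card_le_card hsub
    exact le_trans (Nat.add_le_add_left h2 _) (h3.trans_eq hIcard)
end
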